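/- For the channel Y = Z + N, the conditional second moment of the input is given by the normalized Laplacian of the likelihood ratio: E[‖Z‖^2 | Y = y] = (∇² l(y)) / l(y) for every y ∈ ℝ^L. -/

import Mathlib

/-!
Since `‖y - z‖² = ‖y‖² - 2⟪z, y⟫ + ‖z‖²`, the Gaussian kernel factors as
`p_N(y - z) = p_N(y) · exp(⟪z, y⟫ - ‖z‖²/2)`, so `l(y) = E[exp(⟪Z, y⟫ - ‖Z‖²/2)]`.
Differentiating twice along a vector `v` under the expectation brings down `⟪Z, v⟫²`;
the derivatives are dominated because `‖z‖ᵏ exp(⟪z, y⟫ - ‖z‖²/2)` is bounded uniformly in `z`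
and in `y` on bounded sets. Summing over the standard basis gives
`∇² l(y) = E[‖Z‖² exp(⟪Z, y⟫ - ‖Z‖²/2)]`, and dividing by `l(y)` the factor `p_N(y)` cancels.
-/

open MeasureTheory ProbabilityTheory Real Filter
open scoped ENNReal NNReal Topology RealInnerProductSpace

noncomputable section

/-- Density `p_N(y) = (2π)^{-L/2} exp(-‖y‖²/2)` of the `L`-dimensional standard Gaussian. -/
def stdGaussianDensity {L : ℕ} (y : EuclideanSpace ℝ (Fin L)) : ℝ :=
  (2 * π) ^ (-(L : ℝ) / 2) * Real.exp (-‖y‖ ^ 2 / 2)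

/-- Density `p_Y(y) = E[p_N(y − Z)]` of the output `Y = Z + N` of the standard Gaussian
channel with input `Z`. -/
def outDensity {Ω : Type*} [MeasurableSpace Ω] {L : ℕ} (μ : Measure Ω)
    (Z : Ω → EuclideanSpace ℝ (Fin L)) (y : EuclideanSpace ℝ (Fin L)) : ℝ :=
  ∫ ω, stdGaussianDensity (y - Z ω) ∂μ

/-- Likelihood ratio `l(y) = p_Y(y) / p_N(y)`. -/
def likRatio {Ω : Type*} [MeasurableSpace Ω] {L : ℕ} (μ : Measure Ω)
    (Z : Ω → EuclideanSpace ℝ (Fin L)) (y : EuclideanSpace ℝ (Fin L)) : ℝ :=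
  outDensity μ Z y / stdGaussianDensity y

/-- Conditional mean `E[Z | Y = y] = E[Z · p_N(y − Z)] / p_Y(y)` of the input `Z` given the
output value `Y = y` (Bayes formula). -/
def condMeanBayes {Ω : Type*} [MeasurableSpace Ω] {L : ℕ} (μ : Measure Ω)
    (Z : Ω → EuclideanSpace ℝ (Fin L)) (y : EuclideanSpace ℝ (Fin L)) :
    EuclideanSpace ℝ (Fin L) :=
  WithLp.toLp 2 (fun l => (∫ ω, Z ω l * stdGaussianDensity (y - Z ω) ∂μ) / outDensity μ Z y)

/-- The Laplacian `∇²f(y) = Σ_l ∂²f/∂y_l²` of a function on `ℝ^L`. -/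
def laplacian {L : ℕ} (f : EuclideanSpace ℝ (Fin L) → ℝ) (y : EuclideanSpace ℝ (Fin L)) : ℝ :=
  ∑ l, fderiv ℝ (fun z => fderiv ℝ f z (EuclideanSpace.single l 1)) y
    (EuclideanSpace.single l 1)

section GaussianTilt

variable {E : Type*} [NormedAddCommGroup E] [InnerProductSpace ℝ E]

def gaussianTilt (y z : E) : ℝ :=
  exp (⟪z, y⟫ - ‖z‖ ^ 2 / 2)

lemma gaussianTilt_pos (y z : E) : 0 < gaussianTilt y z := exp_pos _

lemma continuous_gaussianTilt (y : E) : Continuous (gaussianTilt y) := by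
  unfold gaussianTilt
  fun_prop

lemma hasFDerivAt_gaussianTilt (y z : E) :
    HasFDerivAt (gaussianTilt · z) (gaussianTilt y z • innerSL ℝ z) y :=
  ((innerSL ℝ z).hasFDerivAt.sub_const _).exp

lemma pow_norm_mul_gaussianTilt_le (k : ℕ) {y z : E} {R : ℝ} (hy : ‖y‖ ≤ R) :
    ‖z‖ ^ k * gaussianTilt y z ≤ exp ((R + k) ^ 2 / 2) := by
  have hpow : ‖z‖ ^ k ≤ exp (k * ‖z‖) := by
    rw [exp_nat_mul]
    exact pow_le_pow_left₀ (norm_nonneg z) (by linarith [add_one_le_exp ‖z‖]) k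
  have hinner : ⟪z, y⟫ ≤ ‖z‖ * R :=
    (real_inner_le_norm z y).trans (mul_le_mul_of_nonneg_left hy (norm_nonneg z))
  calc ‖z‖ ^ k * gaussianTilt y z ≤ exp (k * ‖z‖) * gaussianTilt y z :=
        mul_le_mul_of_nonneg_right hpow (gaussianTilt_pos y z).le
    _ = exp (k * ‖z‖ + (⟪z, y⟫ - ‖z‖ ^ 2 / 2)) := (exp_add _ _).symm
    _ ≤ exp ((R + k) ^ 2 / 2) := exp_le_exp.2 (by nlinarith [sq_nonneg (R + k - ‖z‖)])

lemma abs_mul_pow_norm_mul_gaussianTilt_le {w : E → ℝ} {C : ℝ} {k : ℕ}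
    (hwk : ∀ z, |w z| ≤ C * ‖z‖ ^ k) (j : ℕ) {y : E} {R : ℝ} (hy : ‖y‖ ≤ R) (z : E) :
    |w z| * ‖z‖ ^ j * gaussianTilt y z ≤ |C| * exp ((R + (k + j)) ^ 2 / 2) := by
  have hw : |w z| ≤ |C| * ‖z‖ ^ k :=
    (hwk z).trans (mul_le_mul_of_nonneg_right (le_abs_self C) (by positivity))
  calc |w z| * ‖z‖ ^ j * gaussianTilt y z
        ≤ |C| * ‖z‖ ^ k * ‖z‖ ^ j * gaussianTilt y z := by
          gcongr
          exact (gaussianTilt_pos y z).le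
    _ = |C| * (‖z‖ ^ (k + j) * gaussianTilt y z) := by ring
    _ ≤ |C| * exp ((R + (k + j)) ^ 2 / 2) := by
          gcongr
          exact_mod_cast pow_norm_mul_gaussianTilt_le (k + j) hy

end GaussianTilt

section Integral

variable {E : Type*} [NormedAddCommGroup E] [InnerProductSpace ℝ E]
  {Ω : Type*} [MeasurableSpace Ω] {μ : Measure Ω} [IsFiniteMeasure μ] {Z : Ω → E}
  {w : E → ℝ} {C : ℝ} {k : ℕ}

lemma integrable_mul_gaussianTilt (hZ : AEStronglyMeasurable Z μ) (hw : Continuous w)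
    (hwk : ∀ z, |w z| ≤ C * ‖z‖ ^ k) (y : E) :
    Integrable (fun ω => w (Z ω) * gaussianTilt y (Z ω)) μ := by
  refine Integrable.mono' (integrable_const (|C| * exp ((‖y‖ + k) ^ 2 / 2)))
    ((hw.mul (continuous_gaussianTilt y)).comp_aestronglyMeasurable hZ)
    (ae_of_all _ fun ω => ?_)
  simpa [abs_mul, abs_of_pos (gaussianTilt_pos y (Z ω))] using
    abs_mul_pow_norm_mul_gaussianTilt_le hwk 0 (le_refl ‖y‖) (Z ω)

lemma norm_mul_gaussianTilt_smul_innerSL_le (hwk : ∀ z, |w z| ≤ C * ‖z‖ ^ k) {y : E} {R : ℝ}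
    (hy : ‖y‖ ≤ R) (z : E) :
    ‖(w z * gaussianTilt y z) • innerSL ℝ z‖ ≤ |C| * exp ((R + (k + 1)) ^ 2 / 2) := by
  rw [norm_smul, innerSL_apply_norm, Real.norm_eq_abs, abs_mul,
    abs_of_pos (gaussianTilt_pos y z), mul_right_comm, ← pow_one ‖z‖]
  exact_mod_cast abs_mul_pow_norm_mul_gaussianTilt_le hwk 1 hy z

lemma hasFDerivAt_integral_mul_gaussianTilt (hZ : AEStronglyMeasurable Z μ) (hw : Continuous w)
    (hwk : ∀ z, |w z| ≤ C * ‖z‖ ^ k) (y₀ : E) :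
    HasFDerivAt (fun y => ∫ ω, w (Z ω) * gaussianTilt y (Z ω) ∂μ)
      (∫ ω, (w (Z ω) * gaussianTilt y₀ (Z ω)) • innerSL ℝ (Z ω) ∂μ) y₀ := by
  have hball : ∀ y ∈ Metric.ball y₀ 1, ‖y‖ ≤ ‖y₀‖ + 1 := fun y hy => by
    have := norm_le_norm_add_norm_sub' y y₀
    linarith [mem_ball_iff_norm.1 hy]
  refine hasFDerivAt_integral_of_dominated_of_fderiv_le (𝕜 := ℝ)
    (Metric.ball_mem_nhds y₀ one_pos)
    (F' := fun y ω => (w (Z ω) * gaussianTilt y (Z ω)) • innerSL ℝ (Z ω))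
    (bound := fun _ => |C| * exp ((‖y₀‖ + 1 + (k + 1)) ^ 2 / 2))
    (Eventually.of_forall fun y => (integrable_mul_gaussianTilt hZ hw hwk y).1)
    (integrable_mul_gaussianTilt hZ hw hwk y₀) ?_ ?_ (integrable_const _) ?_
  · exact ((hw.mul (continuous_gaussianTilt y₀)).smul
      (innerSL ℝ).continuous).comp_aestronglyMeasurable hZ
  · exact ae_of_all _ fun ω y hy => norm_mul_gaussianTilt_smul_innerSL_le hwk (hball y hy) _
  · exact ae_of_all _ fun ω y _ => by
      simpa only [mul_smul] using (hasFDerivAt_gaussianTilt y (Z ω)).const_mul (w (Z ω))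

lemma fderiv_integral_mul_gaussianTilt_apply (hZ : AEStronglyMeasurable Z μ)
    (hw : Continuous w) (hwk : ∀ z, |w z| ≤ C * ‖z‖ ^ k) (y v : E) :
    fderiv ℝ (fun y => ∫ ω, w (Z ω) * gaussianTilt y (Z ω) ∂μ) y v
      = ∫ ω, (w (Z ω) * ⟪Z ω, v⟫) * gaussianTilt y (Z ω) ∂μ := by
  have hint : Integrable (fun ω => (w (Z ω) * gaussianTilt y (Z ω)) • innerSL ℝ (Z ω)) μ :=
    Integrable.mono' (integrable_const _) (((hw.mul (continuous_gaussianTilt y)).smul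
      (innerSL ℝ).continuous).comp_aestronglyMeasurable hZ)
      (ae_of_all _ fun ω => norm_mul_gaussianTilt_smul_innerSL_le hwk le_rfl (Z ω))
  rw [(hasFDerivAt_integral_mul_gaussianTilt hZ hw hwk y).fderiv,
    ContinuousLinearMap.integral_apply hint v]
  congr 1 with ω
  simp only [smul_apply, innerSL_apply_apply, smul_eq_mul]
  ring

lemma fderiv_fderiv_integral_gaussianTilt_apply (hZ : AEStronglyMeasurable Z μ) (y v : E) :
    fderiv ℝ (fun y' => fderiv ℝ (fun y => ∫ ω, gaussianTilt y (Z ω) ∂μ) y' v) y v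
      = ∫ ω, ⟪Z ω, v⟫ ^ 2 * gaussianTilt y (Z ω) ∂μ := by
  have hfirst : (fun y' => fderiv ℝ (fun y => ∫ ω, gaussianTilt y (Z ω) ∂μ) y' v)
      = fun y' => ∫ ω, ⟪Z ω, v⟫ * gaussianTilt y' (Z ω) ∂μ := funext fun y' => by
    simpa only [one_mul] using fderiv_integral_mul_gaussianTilt_apply (w := fun _ => 1)
      (C := 1) (k := 0) hZ continuous_const (by simp) y' v
  have hinner : ∀ z, |⟪z, v⟫| ≤ ‖v‖ * ‖z‖ ^ 1 := fun z => by
    rw [pow_one, mul_comm]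
    exact abs_real_inner_le_norm z v
  rw [hfirst]
  simpa only [sq] using
    fderiv_integral_mul_gaussianTilt_apply hZ (by fun_prop) hinner y v

end Integral

section EuclideanSpace

variable {L : ℕ}

lemma stdGaussianDensity_pos (y : EuclideanSpace ℝ (Fin L)) : 0 < stdGaussianDensity y := by
  unfold stdGaussianDensity
  positivity

lemma stdGaussianDensity_sub (y z : EuclideanSpace ℝ (Fin L)) :
    stdGaussianDensity (y - z) = stdGaussianDensity y * gaussianTilt y z := by
  unfold stdGaussianDensity gaussianTilt
  rw [mul_assoc, ← exp_add, norm_sub_sq_real, real_inner_comm]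
  ring_nf

variable {Ω : Type*} [MeasurableSpace Ω] {μ : Measure Ω} {Z : Ω → EuclideanSpace ℝ (Fin L)}

lemma integral_mul_stdGaussianDensity_sub (f : Ω → ℝ) (y : EuclideanSpace ℝ (Fin L)) :
    ∫ ω, f ω * stdGaussianDensity (y - Z ω) ∂μ
      = stdGaussianDensity y * ∫ ω, f ω * gaussianTilt y (Z ω) ∂μ := by
  rw [← integral_const_mul]
  congr 1 with ω
  rw [stdGaussianDensity_sub]
  ring

lemma outDensity_eq (y : EuclideanSpace ℝ (Fin L)) :
    outDensity μ Z y = stdGaussianDensity y * ∫ ω, gaussianTilt y (Z ω) ∂μ := by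
  rw [outDensity]
  simpa only [one_mul] using integral_mul_stdGaussianDensity_sub (μ := μ) (Z := Z) (fun _ => 1) y

lemma likRatio_eq : likRatio μ Z = fun y => ∫ ω, gaussianTilt y (Z ω) ∂μ := funext fun y => by
  rw [likRatio, outDensity_eq, mul_div_cancel_left₀ _ (stdGaussianDensity_pos y).ne']

lemma laplacian_likRatio [IsFiniteMeasure μ] (hZ : AEStronglyMeasurable Z μ)
    (y : EuclideanSpace ℝ (Fin L)) :
    laplacian (likRatio μ Z) y = ∫ ω, ‖Z ω‖ ^ 2 * gaussianTilt y (Z ω) ∂μ := by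
  have hsq : ∀ (v z : EuclideanSpace ℝ (Fin L)), |⟪z, v⟫ ^ 2| ≤ ‖v‖ ^ 2 * ‖z‖ ^ 2 := by
    intro v z
    rw [abs_pow, ← mul_pow, mul_comm ‖v‖]
    exact pow_le_pow_left₀ (abs_nonneg _) (abs_real_inner_le_norm z v) 2
  rw [laplacian, likRatio_eq]
  simp_rw [fderiv_fderiv_integral_gaussianTilt_apply hZ]
  rw [← integral_finsetSum _
    fun l _ => integrable_mul_gaussianTilt hZ (by fun_prop) (hsq _) y]
  congr 1 with ω
  rw [← Finset.sum_mul]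
  simp_rw [← EuclideanSpace.basisFun_apply, OrthonormalBasis.sum_sq_inner_left]

end EuclideanSpace

theorem condSecondMoment_eq_laplacian_likRatio_div_general
    {Ω : Type*} [MeasurableSpace Ω] (μ : Measure Ω) [IsProbabilityMeasure μ]
    {L : ℕ} (Z : Ω → EuclideanSpace ℝ (Fin L)) (hZ : Measurable Z) :
    ∀ y : EuclideanSpace ℝ (Fin L),
      (∫ ω, ‖Z ω‖ ^ 2 * stdGaussianDensity (y - Z ω) ∂μ) / outDensity μ Z y
        = laplacian (likRatio μ Z) y / likRatio μ Z y := by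
  intro y
  rw [integral_mul_stdGaussianDensity_sub, outDensity_eq,
    laplacian_likRatio hZ.aestronglyMeasurable, likRatio_eq,
    mul_div_mul_left _ _ (stdGaussianDensity_pos y).ne']

/-- **Lemma 4**: for the channel `Y = Z + N`, the conditional second moment of the input is
the normalized Laplacian of the likelihood ratio: `E[‖Z‖² | Y = y] = ∇²l(y) / l(y)`. -/
theorem condSecondMoment_eq_laplacian_likRatio_div
    {Ω : Type*} [MeasurableSpace Ω] (μ : Measure Ω) [IsProbabilityMeasure μ]
    {L : ℕ} (Z : Ω → EuclideanSpace ℝ (Fin L)) (hZ : Measurable Z)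
    (hZ2 : Integrable (fun ω => ‖Z ω‖ ^ 2) μ) :
    ∀ y : EuclideanSpace ℝ (Fin L),
      (∫ ω, ‖Z ω‖ ^ 2 * stdGaussianDensity (y - Z ω) ∂μ) / outDensity μ Z y
        = laplacian (likRatio μ Z) y / likRatio μ Z y :=
  condSecondMoment_eq_laplacian_likRatio_div_general μ Z hZ
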